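/- There exists a universal constant C > 0 such that the following holds for all integers n ≥ r ≥ s ≥ 1 with r even: if Q ⊆ 𝔽₂^n is a linear [n,k,d]-code with d > 2(r−s), and Δ_r = {x ∈ 𝔽₂^n : Δ(x) = r}, then G_{Q ∩ Δ_r} is an (n,r,s)-design with independence number α(G_{Q ∩ Δ_r}) ≤ C·r³·2^{2(n−k)/r}. -/

import Mathlib

/-- An `(n,r,s)`-design: an `r`-uniform hypergraph on vertex set `Fin n` (given by its
finite set of hyperedges) in which any two distinct hyperedges intersect in fewer than
`s` vertices. -/
def IsDesign (n r s : ℕ) (E : Finset (Finset (Fin n))) : Prop :=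
  (∀ e ∈ E, e.card = r) ∧
  ∀ e₁ ∈ E, ∀ e₂ ∈ E, e₁ ≠ e₂ → (e₁ ∩ e₂).card < s

/-- The independence number of a hypergraph: the size of the largest set of vertices
containing no hyperedge. -/
noncomputable def indepNum (n : ℕ) (E : Finset (Finset (Fin n))) : ℕ :=
  sSup {m | ∃ S : Finset (Fin n), (∀ e ∈ E, ¬ e ⊆ S) ∧ S.card = m}

/-- The Hamming weight `Δ(x) = #{i : x_i = 1}` of a vector `x ∈ 𝔽₂ⁿ`. -/
def wt {n : ℕ} (x : Fin n → ZMod 2) : ℕ :=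
  (Finset.univ.filter (fun i => x i = 1)).card

/-- The Hamming distance `Δ(x,y) = Δ(x − y)`. -/
def hdist {n : ℕ} (x y : Fin n → ZMod 2) : ℕ := wt (x - y)

/-- The support `supp(x) = {i : x_i = 1}` of a vector `x ∈ 𝔽₂ⁿ`. -/
def supp {n : ℕ} (x : Fin n → ZMod 2) : Finset (Fin n) :=
  Finset.univ.filter (fun i => x i = 1)

/-- The hypergraph `G_T` associated to `T ⊆ 𝔽₂ⁿ`: vertex set `[n]`, hyperedges
`{supp(x) : x ∈ T}`. -/
def hypergraphOf {n : ℕ} (T : Finset (Fin n → ZMod 2)) : Finset (Finset (Fin n)) :=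
  T.image supp

/-- The set of codewords of `Q` of Hamming weight exactly `r`, as a finite set. -/
noncomputable def weightSlice (n r : ℕ) (Q : Submodule (ZMod 2) (Fin n → ZMod 2)) :
    Finset (Fin n → ZMod 2) :=
  (Set.toFinite {x | x ∈ Q ∧ wt x = r}).toFinset

/-!
Two distinct weight-`r` codewords `x, y` satisfy `Δ(x - y) = 2r - 2|supp x ∩ supp y|`, so the
distance bound makes the supports pairwise meet in fewer than `s` points.

For the independence number, shorten `Q` to an independent set `S` of size `m`: the code `P` of
words of `Q` supported in `S` has length `m`, dimension at least `k - (n - m)` and no word of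
weight `r`. By orthogonality of characters, the Krawtchouk numbers `K_r(|y|)` summed over the dual
code `P^⊥` count the weight-`r` words of `P`, so they sum to `0`; the term `y = 0` is `C(m, r)`,
hence `r! C(m, r) ≤ |P^⊥| · max_y (-r! K_r(|y|))`. The three-term recurrence of `j! K_j` shows
`-r! K_r ≤ (4 √(r m))^r` for even `r`: `K_r` is nonnegative when `|m - 2|y|| ≥ 2 √(r m)` and
otherwise `|r! K_r| ≤ (|m - 2|y|| + 2 √(r m))^r`. With `|P^⊥| ≤ 2^(n - k)` and
`m^r ≤ 2^r r! C(m, r)` for `m ≥ 2r`, this gives `m^r ≤ 4^(n - k) (64 r)^r`.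
-/

open Finset Polynomial Matrix LinearMap.BilinForm

theorem Finset.card_symmDiff_add_two_mul_card_inter {α : Type*} [DecidableEq α]
    (s t : Finset α) : #(symmDiff s t) + 2 * #(s ∩ t) = #s + #t := by
  rw [symmDiff_def, sup_eq_union, card_union_of_disjoint disjoint_sdiff_sdiff]
  have := card_sdiff_add_card_inter s t
  have := card_sdiff_add_card_inter t s
  rw [inter_comm t s] at this
  omega

theorem ZMod.eq_one_iff_ne_zero_two (z : ZMod 2) : z = 1 ↔ z ≠ 0 := by
  revert z; decide

theorem Nat.pow_le_two_pow_mul_descFactorial {m r : ℕ} (h : 2 * r ≤ m) :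
    m ^ r ≤ 2 ^ r * m.descFactorial r :=
  calc m ^ r ≤ (2 * (m + 1 - r)) ^ r := Nat.pow_le_pow_left (by omega) r
    _ = 2 ^ r * (m + 1 - r) ^ r := Nat.mul_pow ..
    _ ≤ 2 ^ r * m.descFactorial r := by gcongr; exact Nat.pow_sub_le_descFactorial m r

theorem le_mul_two_rpow_of_pow_le {m a : ℝ} {r ℓ : ℕ} (ha : 0 ≤ a) (hr : r ≠ 0)
    (h : m ^ r ≤ 4 ^ ℓ * a ^ r) : m ≤ a * 2 ^ (2 * (ℓ : ℝ) / r) := by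
  have hpow : (a * 2 ^ (2 * (ℓ : ℝ) / r)) ^ r = 4 ^ ℓ * a ^ r := by
    rw [mul_pow, ← Real.rpow_natCast (2 ^ _), ← Real.rpow_mul zero_le_two,
      div_mul_cancel₀ _ (Nat.cast_ne_zero.mpr hr), Real.rpow_mul zero_le_two, Real.rpow_natCast]
    norm_num
    ring
  exact le_of_pow_le_pow_left₀ hr (by positivity) (hpow ▸ h)

theorem Submodule.finrank_add_le_finrank_comap_add {K V W : Type*} [DivisionRing K]
    [AddCommGroup V] [Module K V] [FiniteDimensional K V] [AddCommGroup W] [Module K W]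
    [FiniteDimensional K W] {f : V →ₗ[K] W} (hf : Function.Injective f) (Q : Submodule K W) :
    Module.finrank K Q + Module.finrank K V ≤
      Module.finrank K (Q.comap f) + Module.finrank K W := by
  have hcomap : Module.finrank K (Q.comap f) = Module.finrank K ↥(LinearMap.range f ⊓ Q) := by
    rw [← Submodule.map_comap_eq, (Submodule.equivMapOfInjective f hf _).finrank_eq]
  have := Submodule.finrank_sup_add_finrank_inf_eq (LinearMap.range f) Q
  have := Submodule.finrank_le (LinearMap.range f ⊔ Q)
  have := LinearMap.finrank_range_of_inj hf
  omega

theorem hammingNorm_extend_zero {ι η β : Type*} [Fintype ι] [Fintype η] [Zero β]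
    [DecidableEq β] {s : ι → η} (hs : Function.Injective s) (f : ι → β) :
    hammingNorm (Function.extend s f 0) = hammingNorm f := by
  rw [hammingNorm, hammingNorm, ← card_map ⟨s, hs⟩]
  congr 1
  ext j
  simp only [mem_filter, mem_univ, true_and, mem_map, Function.Embedding.coeFn_mk]
  constructor
  · intro hj
    by_cases h : ∃ i, s i = j
    · obtain ⟨i, rfl⟩ := h
      exact ⟨i, by rwa [hs.extend_apply] at hj, rfl⟩
    · exact absurd (Function.extend_apply' f (0 : η → β) j h) hj
  · rintro ⟨i, hi, rfl⟩
    rwa [hs.extend_apply]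

theorem AddChar.map_sum_eq_prod {ι A M : Type*} [AddCommMonoid A] [CommMonoid M]
    (ψ : AddChar A M) (s : Finset ι) (f : ι → A) :
    ψ (∑ i ∈ s, f i) = ∏ i ∈ s, ψ (f i) := by
  classical
  induction s using Finset.induction_on with
  | empty => simp
  | insert i s hi ih => rw [sum_insert hi, prod_insert hi, AddChar.map_add_eq_mul, ih]

theorem Polynomial.mul_derivative_pow {R : Type*} [CommSemiring R] (p : R[X]) (n : ℕ) :
    p * derivative (p ^ n) = C (n : R) * p ^ n * derivative p := by
  cases n with
  | zero => simp
  | succ n => rw [derivative_pow, Nat.add_sub_cancel, pow_succ]; ring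

section ThreeTermRecurrence

variable {R : Type*} [CommRing R] [LinearOrder R] [IsStrictOrderedRing R]
  {L w : ℕ → R} {y c : R} {r : ℕ}

theorem abs_le_pow_of_three_term_recurrence (h0 : L 0 = 1) (h1 : L 1 = y)
    (hrec : ∀ j, L (j + 2) = y * L (j + 1) - w j * L j) (hc : 0 ≤ c)
    (hw : ∀ j, j + 2 ≤ r → |w j| ≤ c ^ 2) : ∀ j ≤ r, |L j| ≤ (|y| + c) ^ j := by
  have hZc : c ≤ |y| + c := le_add_of_nonneg_left (abs_nonneg y)
  intro j
  induction j using Nat.twoStepInduction with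
  | zero => simp [h0]
  | one => simp [h1, hc]
  | more j ih₀ ih₁ =>
    intro hj
    have hwj : |w j| * |L j| ≤ c * (|y| + c) * (|y| + c) ^ j :=
      mul_le_mul (by nlinarith [hw j hj]) (ih₀ (by omega)) (abs_nonneg _) (by positivity)
    calc |L (j + 2)| ≤ |y| * |L (j + 1)| + |w j| * |L j| := by
          rw [hrec, ← abs_mul, ← abs_mul]; exact abs_sub _ _
      _ ≤ |y| * (|y| + c) ^ (j + 1) + c * (|y| + c) * (|y| + c) ^ j := by
          gcongr; exact ih₁ (by omega)
      _ = (|y| + c) ^ (j + 2) := by ring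

theorem nonneg_of_three_term_recurrence (h0 : L 0 = 1) (h1 : L 1 = y)
    (hrec : ∀ j, L (j + 2) = y * L (j + 1) - w j * L j) (hc : 0 ≤ c) (hcy : c ≤ y)
    (hw : ∀ j, j + 2 ≤ r → 4 * w j ≤ c ^ 2) : 0 ≤ L r := by
  have hy : 0 ≤ y := hc.trans hcy
  -- the invariant: `L (j + 1) / L j ≥ y / 2`, which `4 w j ≤ y ^ 2` propagates
  have key : ∀ j, j < r → 0 ≤ L j ∧ y * L j ≤ 2 * L (j + 1) := by
    intro j
    induction j with
    | zero => intro; simp [h0, h1]; linarith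
    | succ j ih =>
      intro hj
      obtain ⟨hL, hratio⟩ := ih (by omega)
      have hL₁ : 0 ≤ L (j + 1) := by nlinarith
      refine ⟨hL₁, ?_⟩
      have : 4 * w j * L j ≤ y ^ 2 * L j :=
        mul_le_mul_of_nonneg_right ((hw j hj).trans (by nlinarith)) hL
      rw [hrec]
      nlinarith
  rcases r with _ | r
  · simp [h0]
  · obtain ⟨hL, hratio⟩ := key r (by omega)
    nlinarith

theorem neg_le_pow_of_three_term_recurrence (h0 : L 0 = 1) (h1 : L 1 = y)
    (hrec : ∀ j, L (j + 2) = y * L (j + 1) - w j * L j) (hc : 0 ≤ c)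
    (hw : ∀ j, j + 2 ≤ r → 4 * |w j| ≤ c ^ 2) (hr : Even r) : -L r ≤ (2 * c) ^ r := by
  have hw' : ∀ j, j + 2 ≤ r → 4 * w j ≤ c ^ 2 := fun j hj => by
    linarith [le_abs_self (w j), hw j hj]
  have hpow : 0 ≤ (2 * c) ^ r := by positivity
  rcases le_or_gt c y with hcy | hyc
  · linarith [nonneg_of_three_term_recurrence h0 h1 hrec hc hcy hw']
  rcases le_or_gt y (-c) with hyc' | hyc'
  · have hflip := nonneg_of_three_term_recurrence (L := fun j => (-1) ^ j * L j) (y := -y)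
      (w := w) (by simp [h0]) (by simp [h1]) (fun j => by simp only [pow_succ, hrec]; ring) hc
      (by linarith) hw'
    simp only [hr.neg_one_pow, one_mul] at hflip
    linarith
  · calc -L r ≤ |L r| := neg_le_abs _
      _ ≤ (|y| + c) ^ r := abs_le_pow_of_three_term_recurrence h0 h1 hrec hc
          (fun j hj => by nlinarith [abs_nonneg (w j), hw j hj]) r le_rfl
      _ ≤ (2 * c) ^ r := by gcongr; linarith [abs_lt.mpr ⟨hyc', hyc⟩]

end ThreeTermRecurrence

/-- `krawtchouk a d j` is the Krawtchouk number `K_j(d)` of length `a + d`. -/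
noncomputable def krawtchouk (a d j : ℕ) : ℤ := ((1 + X) ^ a * (1 - X) ^ d : ℤ[X]).coeff j

theorem one_sub_X_sq_mul_derivative_krawtchouk (a d : ℕ) :
    (1 - X ^ 2) * derivative ((1 + X) ^ a * (1 - X) ^ d : ℤ[X]) =
      (C ((a : ℤ) - d) - C ((a : ℤ) + d) * X) * ((1 + X) ^ a * (1 - X) ^ d) := by
  have ha := mul_derivative_pow (1 + X : ℤ[X]) a
  have hd := mul_derivative_pow (1 - X : ℤ[X]) d
  simp only [derivative_add, derivative_sub, derivative_one, derivative_X, map_natCast] at ha hd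
  rw [derivative_mul]
  simp only [map_sub, map_add, map_natCast]
  linear_combination (1 - X) * (1 - X : ℤ[X]) ^ d * ha + (1 + X) * (1 + X : ℤ[X]) ^ a * hd

theorem krawtchouk_zero (a d : ℕ) : krawtchouk a d 0 = 1 := by
  simp [krawtchouk, coeff_zero_eq_eval_zero]

theorem krawtchouk_one (a d : ℕ) : krawtchouk a d 1 = (a : ℤ) - d := by
  have h := congrArg (coeff · 0) (one_sub_X_sq_mul_derivative_krawtchouk a d)
  simp only [sub_mul, one_mul, coeff_sub, coeff_derivative, mul_assoc, coeff_C_mul] at h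
  simpa [coeff_X_pow_mul', krawtchouk, krawtchouk_zero, coeff_zero_eq_eval_zero] using h

theorem krawtchouk_add_two (a d j : ℕ) :
    ((j : ℤ) + 2) * krawtchouk a d (j + 2) =
      ((a : ℤ) - d) * krawtchouk a d (j + 1) - ((a : ℤ) + d - j) * krawtchouk a d j := by
  have h := congrArg (coeff · (j + 1)) (one_sub_X_sq_mul_derivative_krawtchouk a d)
  simp only [sub_mul, one_mul, coeff_sub, coeff_derivative, mul_assoc, coeff_C_mul,
    coeff_X_mul] at h
  rw [coeff_X_pow_mul'] at h
  have hX2 : (if 2 ≤ j + 1 then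
      (derivative ((1 + X) ^ a * (1 - X) ^ d : ℤ[X])).coeff (j + 1 - 2) else 0) =
      j * krawtchouk a d j := by
    rcases j with _ | j
    · simp
    · rw [if_pos (by omega), show j + 1 + 1 - 2 = j from rfl, coeff_derivative, krawtchouk]
      push_cast; ring
  rw [hX2] at h
  simp only [krawtchouk] at h ⊢
  push_cast at h ⊢
  linear_combination h

theorem krawtchouk_of_weight_zero (m r : ℕ) : krawtchouk m 0 r = m.choose r := by
  simp [krawtchouk, coeff_one_add_X_pow]

open Nat in
theorem neg_factorial_mul_krawtchouk_le {R : Type*} [CommRing R] [LinearOrder R]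
    [IsStrictOrderedRing R] {a d r : ℕ} (hr : Even r) (hrad : r ≤ a + d) {c : R} (hc : 0 ≤ c)
    (hcr : ((4 * r * (a + d) : ℕ) : R) ≤ c ^ 2) :
    -((r ! * krawtchouk a d r : ℤ) : R) ≤ (2 * c) ^ r := by
  refine neg_le_pow_of_three_term_recurrence (L := fun j => ((j ! * krawtchouk a d j : ℤ) : R))
    (w := fun j => ((j : R) + 1) * ((a : R) + d - j)) (y := (a : R) - d)
    (by simp [krawtchouk_zero]) (by simp [krawtchouk_one]) (fun j => ?_) hc (fun j hj => ?_) hr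
  · have h := congrArg (fun z : ℤ => ((((j + 1) ! : ℕ) : ℤ) * z : R))
      (krawtchouk_add_two a d j)
    simp only [factorial_succ] at h ⊢
    push_cast at h ⊢
    linear_combination h
  · have hj : (j : R) + 2 ≤ r := by exact_mod_cast hj
    have hM : (r : R) ≤ a + d := by exact_mod_cast hrad
    have hw : 0 ≤ ((j : R) + 1) * ((a : R) + d - j) := by
      apply mul_nonneg <;> linarith
    rw [abs_of_nonneg hw]
    push_cast at hcr
    nlinarith

def signChar : AddChar (ZMod 2) ℤ := AddChar.zmodChar 2 (by norm_num : (-1 : ℤ) ^ 2 = 1)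

theorem signChar_one : signChar 1 = -1 := by
  simp [signChar, AddChar.zmodChar_apply, ZMod.val_one]

theorem signChar_eq_ite (z : ZMod 2) : signChar z = if z = 0 then 1 else -1 := by
  rcases (by decide : ∀ z : ZMod 2, z = 0 ∨ z = 1) z with rfl | rfl
  · simp
  · simp [signChar_one]

section Weights

variable {ι : Type*} [Fintype ι]

theorem krawtchouk_eq_sum_powersetCard (y : ι → ZMod 2) (r : ℕ) :
    krawtchouk (Fintype.card ι - hammingNorm y) (hammingNorm y) r =
      ∑ T ∈ univ.powersetCard r, signChar (∑ s ∈ T, y s) := by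
  have hprod : ∏ s, (1 + C (signChar (y s)) * X) =
      (1 + X) ^ (Fintype.card ι - hammingNorm y) * (1 - X : ℤ[X]) ^ hammingNorm y := by
    rw [prod_congr rfl (g := fun s => if y s = 0 then 1 + X else 1 - X) fun s _ => by
      rw [signChar_eq_ite]; split_ifs <;> simp [sub_eq_add_neg]]
    rw [prod_ite, prod_const, prod_const, hammingNorm, ← Finset.card_univ,
      ← card_filter_add_card_filter_not (s := univ) (fun s => y s = 0)]
    simp
  rw [krawtchouk, ← hprod, prod_one_add, finsetSum_coeff, powersetCard_eq_filter, sum_filter]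
  refine sum_congr rfl fun T _ => ?_
  rw [prod_mul_distrib, prod_const, ← map_prod, coeff_C_mul_X_pow, AddChar.map_sum_eq_prod]
  simp [eq_comm]

theorem indicator_dotProduct [DecidableEq ι] (T : Finset ι) (y : ι → ZMod 2) :
    (fun s => if s ∈ T then 1 else 0) ⬝ᵥ y = ∑ s ∈ T, y s := by
  simp [dotProduct, ite_mul, sum_ite_mem]

theorem hammingNorm_indicator [DecidableEq ι] (T : Finset ι) :
    hammingNorm (fun s => if s ∈ T then (1 : ZMod 2) else 0) = #T := by
  simp [hammingNorm]

end Weights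

section DualCode

variable {K ι : Type*} [Field K] [Fintype ι]

def dualCode (P : Submodule K (ι → K)) : Submodule K (ι → K) :=
  orthogonal (dotProductBilin K K) P

theorem mem_dualCode {P : Submodule K (ι → K)} {y : ι → K} :
    y ∈ dualCode P ↔ ∀ x ∈ P, x ⬝ᵥ y = 0 := Iff.rfl

theorem dotProductBilin_isRefl : IsRefl (dotProductBilin K K : LinearMap.BilinForm K (ι → K)) :=
  fun x y h => by simpa [dotProduct_comm] using h

theorem dotProductBilin_nondegenerate :
    (dotProductBilin K K : LinearMap.BilinForm K (ι → K)).Nondegenerate :=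
  (LinearMap.IsRefl.nondegenerate_iff_separatingLeft
    (dotProductBilin_isRefl (K := K) (ι := ι))).mpr fun x hx => dotProduct_eq_zero x hx

theorem dualCode_dualCode (P : Submodule K (ι → K)) : dualCode (dualCode P) = P :=
  orthogonal_orthogonal dotProductBilin_nondegenerate dotProductBilin_isRefl P

theorem finrank_dualCode (P : Submodule K (ι → K)) :
    Module.finrank K (dualCode P) = Fintype.card ι - Module.finrank K P := by
  rw [dualCode, finrank_orthogonal dotProductBilin_nondegenerate,
    Module.finrank_fintype_fun_eq_card]

end DualCode

section BinaryCodes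

variable {ι : Type*} [Fintype ι]

theorem sum_signChar_dotProduct_eq_zero (D : Submodule (ZMod 2) (ι → ZMod 2)) [Fintype D]
    {v : ι → ZMod 2} (hv : ∃ y ∈ D, v ⬝ᵥ y ≠ 0) :
    ∑ y : D, signChar (v ⬝ᵥ (y : ι → ZMod 2)) = 0 := by
  let ψ : AddChar D ℤ := signChar.compAddMonoidHom
    ((dotProductBilin (ZMod 2) (ZMod 2) v).toAddMonoidHom.comp D.subtype.toAddMonoidHom)
  refine AddChar.sum_eq_zero_of_ne_one (ψ := ψ) fun hψ => ?_
  obtain ⟨y, hyD, hy⟩ := hv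
  have := DFunLike.congr_fun hψ ⟨y, hyD⟩
  simp [ψ, (ZMod.eq_one_iff_ne_zero_two _).mpr hy, signChar_one] at this

theorem sum_krawtchouk_dualCode_eq_zero (P : Submodule (ZMod 2) (ι → ZMod 2))
    [Fintype (dualCode P)] {r : ℕ} (hP : ∀ x ∈ P, hammingNorm x ≠ r) :
    ∑ y : dualCode P, krawtchouk (Fintype.card ι - hammingNorm (y : ι → ZMod 2))
      (hammingNorm (y : ι → ZMod 2)) r = 0 := by
  classical
  simp only [krawtchouk_eq_sum_powersetCard]
  rw [sum_comm]
  refine sum_eq_zero fun T hT => ?_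
  simp only [← indicator_dotProduct]
  apply sum_signChar_dotProduct_eq_zero
  by_contra! h
  rw [← dualCode_dualCode P] at hP
  exact hP _ (mem_dualCode.mpr fun y hy => by rw [dotProduct_comm]; exact h y hy)
    ((hammingNorm_indicator T).trans (mem_powersetCard.mp hT).2)

open Nat in
theorem factorial_mul_choose_le_card_dualCode (P : Submodule (ZMod 2) (ι → ZMod 2)) {r : ℕ}
    (hr : Even r) (hrι : r ≤ Fintype.card ι) (hP : ∀ x ∈ P, hammingNorm x ≠ r) {c : ℝ}
    (hc : 0 ≤ c) (hcr : ((4 * r * Fintype.card ι : ℕ) : ℝ) ≤ c ^ 2) :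
    (r ! * (Fintype.card ι).choose r : ℝ) ≤ Nat.card (dualCode P) * (2 * c) ^ r := by
  classical
  let K : dualCode P → ℤ := fun y => krawtchouk
    (Fintype.card ι - hammingNorm (y : ι → ZMod 2)) (hammingNorm (y : ι → ZMod 2)) r
  have hzero : K 0 = (Fintype.card ι).choose r := by
    simp [K, krawtchouk_of_weight_zero]
  have hbound : ∀ y, -((r ! * K y : ℤ) : ℝ) ≤ (2 * c) ^ r := fun y => by
    have hy := hammingNorm_le_card_fintype (x := (y : ι → ZMod 2))
    exact neg_factorial_mul_krawtchouk_le hr (by omega) hc (by rwa [Nat.sub_add_cancel hy])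
  have hsplit := add_sum_erase univ (fun y => ((r ! * K y : ℤ) : ℝ)) (mem_univ 0)
  have htotal : ∑ y, ((r ! * K y : ℤ) : ℝ) = 0 := by
    rw [← Int.cast_sum, ← mul_sum, sum_krawtchouk_dualCode_eq_zero P hP, mul_zero,
      Int.cast_zero]
  calc (r ! * (Fintype.card ι).choose r : ℝ)
      = ∑ y ∈ univ.erase 0, -((r ! * K y : ℤ) : ℝ) := by
        rw [htotal, hzero] at hsplit
        rw [sum_neg_distrib]
        push_cast at hsplit ⊢
        linarith
    _ ≤ ∑ y ∈ univ.erase 0, (2 * c) ^ r := sum_le_sum fun y _ => hbound y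
    _ ≤ Nat.card (dualCode P) * (2 * c) ^ r := by
        rw [sum_const, nsmul_eq_mul, Nat.card_eq_fintype_card, ← Finset.card_univ]
        gcongr
        exact erase_subset _ _

theorem card_pow_le_of_forall_hammingNorm_ne (P : Submodule (ZMod 2) (ι → ZMod 2)) {r : ℕ}
    (hr : Even r) (hP : ∀ x ∈ P, hammingNorm x ≠ r) :
    Fintype.card ι ^ r ≤ 4 ^ (Fintype.card ι - Module.finrank (ZMod 2) P) * (64 * r) ^ r := by
  set m := Fintype.card ι
  set ℓ := m - Module.finrank (ZMod 2) P
  rcases le_or_gt m (2 * r) with hm | hm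
  · calc m ^ r ≤ (64 * r) ^ r := Nat.pow_le_pow_left (by omega) r
      _ ≤ 4 ^ ℓ * (64 * r) ^ r := Nat.le_mul_of_pos_left _ (by positivity)
  have hcard : Nat.card (dualCode P) = 2 ^ ℓ := by
    rw [Module.natCard_eq_pow_finrank (K := ZMod 2), finrank_dualCode, Nat.card_zmod]
  obtain ⟨c, hc0, hc⟩ : ∃ c : ℝ, 0 ≤ c ∧ c ^ 2 = 4 * r * m :=
    ⟨_, Real.sqrt_nonneg _, Real.sq_sqrt (by positivity)⟩
  have hcore := factorial_mul_choose_le_card_dualCode P hr (by omega) hP hc0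
    (by rw [hc]; push_cast; rfl)
  rw [hcard] at hcore
  have hbound : (m : ℝ) ^ r ≤ 2 ^ ℓ * (2 * (2 * c)) ^ r :=
    calc (m : ℝ) ^ r ≤ 2 ^ r * (r.factorial * m.choose r) := by
          exact_mod_cast (Nat.descFactorial_eq_factorial_mul_choose m r) ▸
            Nat.pow_le_two_pow_mul_descFactorial hm.le
      _ ≤ 2 ^ r * (2 ^ ℓ * (2 * c) ^ r) := by push_cast at hcore; gcongr
      _ = 2 ^ ℓ * (2 * (2 * c)) ^ r := by rw [mul_pow 2 (2 * c)]; ring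
  have hsq : (m : ℝ) ^ r * (m : ℝ) ^ r ≤ (4 ^ ℓ * (64 * r) ^ r) * (m : ℝ) ^ r :=
    calc (m : ℝ) ^ r * (m : ℝ) ^ r = ((m : ℝ) ^ r) ^ 2 := (sq _).symm
      _ ≤ (2 ^ ℓ * (2 * (2 * c)) ^ r) ^ 2 := by gcongr
      _ = ((2 : ℝ) ^ 2) ^ ℓ * ((2 * (2 * c)) ^ 2) ^ r := by
          rw [mul_pow, ← pow_mul, ← pow_mul, ← pow_mul, ← pow_mul, mul_comm ℓ, mul_comm r]
      _ = (4 ^ ℓ * (64 * r) ^ r) * (m : ℝ) ^ r := by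
          rw [show (2 * (2 * c)) ^ 2 = 64 * r * m by linear_combination 16 * hc, mul_pow]
          norm_num [mul_assoc]
  have hm0 : (0 : ℝ) < (m : ℝ) ^ r := pow_pos (by exact_mod_cast (by omega : 0 < m)) r
  exact_mod_cast le_of_mul_le_mul_right hsq hm0

end BinaryCodes

section WordsOfLengthN

variable {n : ℕ}

theorem wt_eq_hammingNorm (x : Fin n → ZMod 2) : wt x = hammingNorm x := by
  simp only [wt, hammingNorm, ZMod.eq_one_iff_ne_zero_two]

theorem supp_sub (x y : Fin n → ZMod 2) : supp (x - y) = symmDiff (supp x) (supp y) := by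
  ext i
  simp only [supp, mem_filter, mem_univ, true_and, mem_symmDiff, Pi.sub_apply]
  generalize x i = a; generalize y i = b
  revert a b; decide

theorem wt_sub_add_two_mul_card_inter (x y : Fin n → ZMod 2) :
    wt (x - y) + 2 * #(supp x ∩ supp y) = wt x + wt y := by
  change #(supp (x - y)) + _ = #(supp x) + #(supp y)
  rw [supp_sub]
  exact card_symmDiff_add_two_mul_card_inter _ _

theorem mem_weightSlice {r : ℕ} {Q : Submodule (ZMod 2) (Fin n → ZMod 2)}
    {x : Fin n → ZMod 2} : x ∈ weightSlice n r Q ↔ x ∈ Q ∧ wt x = r := by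
  simp [weightSlice]

theorem isDesign_hypergraphOf_weightSlice {r s : ℕ} {Q : Submodule (ZMod 2) (Fin n → ZMod 2)}
    (hQ : ∀ x ∈ Q, ∀ y ∈ Q, x ≠ y → 2 * (r - s) < hdist x y) :
    IsDesign n r s (hypergraphOf (weightSlice n r Q)) := by
  simp only [IsDesign, hypergraphOf, forall_mem_image, mem_weightSlice]
  refine ⟨fun x hx => hx.2, fun x hx y hy hxy => ?_⟩
  have hd := hQ x hx.1 y hy.1 (fun h => hxy (h ▸ rfl))
  have := wt_sub_add_two_mul_card_inter x y
  unfold hdist at hd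
  omega

theorem indepNum_le {E : Finset (Finset (Fin n))} {b : ℝ} (hb : 0 ≤ b)
    (h : ∀ S : Finset (Fin n), (∀ e ∈ E, ¬ e ⊆ S) → (#S : ℝ) ≤ b) :
    (indepNum n E : ℝ) ≤ b := by
  rcases Set.eq_empty_or_nonempty {m | ∃ S : Finset (Fin n), (∀ e ∈ E, ¬ e ⊆ S) ∧ #S = m}
    with hempty | hne
  · simp [indepNum, hempty, hb]
  · obtain ⟨S, hS, hcard⟩ := Nat.sSup_mem hne
      ⟨n, fun m ⟨S, _, hm⟩ => hm ▸ (card_le_univ S).trans_eq (Fintype.card_fin n)⟩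
    rw [indepNum, ← hcard]
    exact h S hS

theorem card_pow_le_of_independent {r : ℕ} (hr : Even r)
    (Q : Submodule (ZMod 2) (Fin n → ZMod 2)) {S : Finset (Fin n)}
    (hS : ∀ e ∈ hypergraphOf (weightSlice n r Q), ¬ e ⊆ S) :
    #S ^ r ≤ 4 ^ (n - Module.finrank (ZMod 2) Q) * (64 * r) ^ r := by
  let pad := Function.ExtendByZero.linearMap (ZMod 2) ((↑) : S → Fin n)
  have hsupp (x : S → ZMod 2) : supp (pad x) ⊆ S := fun i hi => by
    by_contra hiS
    have : pad x i = 0 := Function.extend_apply' _ _ _ fun ⟨j, hj⟩ => hiS (hj ▸ j.2)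
    simp [supp, this] at hi
  have hP : ∀ x ∈ Q.comap pad, hammingNorm x ≠ r := fun x hx hxr =>
    hS _ (mem_image_of_mem supp (mem_weightSlice.mpr ⟨hx, by
      rw [wt_eq_hammingNorm, ← hxr]
      exact hammingNorm_extend_zero Subtype.val_injective x⟩)) (hsupp x)
  have hdim := Submodule.finrank_add_le_finrank_comap_add (f := pad)
    (Function.extend_injective Subtype.val_injective (0 : Fin n → ZMod 2)) Q
  rw [Module.finrank_fintype_fun_eq_card, Module.finrank_fintype_fun_eq_card, Fintype.card_coe,
    Fintype.card_fin] at hdim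
  calc #S ^ r = Fintype.card S ^ r := by rw [Fintype.card_coe]
    _ ≤ 4 ^ (Fintype.card S - Module.finrank (ZMod 2) (Q.comap pad)) * (64 * r) ^ r :=
        card_pow_le_of_forall_hammingNorm_ne _ hr hP
    _ ≤ 4 ^ (n - Module.finrank (ZMod 2) Q) * (64 * r) ^ r := by
        rw [Fintype.card_coe]
        exact Nat.mul_le_mul_right _ (Nat.pow_le_pow_right (by norm_num) (by omega))

end WordsOfLengthN

/-- Main design lemma. There is a universal constant `C > 0` such that
for all `n ≥ r ≥ s ≥ 1` with `r` even: if `Q ⊆ 𝔽₂ⁿ` is a linear `[n,k,d]`-code with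
`d > 2(r−s)`, then `G_{Q ∩ Δ_r}` is an `(n,r,s)`-design with independence number
`≤ C·r³·2^{2(n−k)/r}`. -/
theorem main_design_lemma :
    ∃ C : ℝ, 0 < C ∧
      ∀ n r s k : ℕ, 1 ≤ s → s ≤ r → r ≤ n → Even r →
        ∀ Q : Submodule (ZMod 2) (Fin n → ZMod 2),
          Module.finrank (ZMod 2) Q = k →
          (∀ x ∈ Q, ∀ y ∈ Q, x ≠ y → 2 * (r - s) < hdist x y) →
          IsDesign n r s (hypergraphOf (weightSlice n r Q)) ∧
            (indepNum n (hypergraphOf (weightSlice n r Q)) : ℝ) ≤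
              C * (r : ℝ) ^ 3 * (2 : ℝ) ^ (2 * ((n : ℝ) - (k : ℝ)) / (r : ℝ)) := by
  refine ⟨64, by norm_num, fun n r s k hs hsr _ hr Q hk hQ =>
    ⟨isDesign_hypergraphOf_weightSlice hQ, ?_⟩⟩
  have hr0 : 1 ≤ r := hs.trans hsr
  have hkn : k ≤ n := hk ▸ (Submodule.finrank_le Q).trans_eq (by simp)
  calc (indepNum n (hypergraphOf (weightSlice n r Q)) : ℝ)
      ≤ 64 * r * 2 ^ (2 * ((n : ℝ) - k) / r) := indepNum_le (by positivity) fun S hS => by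
        have hS := card_pow_le_of_independent hr Q hS
        rw [hk] at hS
        have := le_mul_two_rpow_of_pow_le (m := #S) (a := 64 * r) (r := r) (ℓ := n - k)
          (by positivity) (by omega) (by exact_mod_cast hS)
        rwa [Nat.cast_sub hkn] at this
    _ ≤ 64 * r ^ 3 * 2 ^ (2 * ((n : ℝ) - k) / r) := by
        gcongr
        exact le_self_pow₀ (by exact_mod_cast hr0) (by norm_num)
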